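/- (One implicit Euler step preserves stationary supersolutions.) Let d ≥ 1, p ∈ (1,∞), s ∈ (0,1), m > 1, q > 0, Δt > 0, and let Ω ⊂ ℝ^d be open and bounded. Let w ∈ W^{s,p}_0(Ω) ∩ L^∞(Ω) with w ≥ 0 a.e. be a weak supersolution of (−Δ)^s_p w = w^{q/m}, i.e. E(w, φ) ≥ ∫_Ω w^{q/m}φ dx for every nonnegative φ ∈ W^{s,p}_0(Ω). Let v ∈ W^{s,p}_0(Ω) ∩ L^∞(Ω) satisfy, for every φ ∈ W^{s,p}_0(Ω) ∩ L^∞(Ω): (1/Δt)∫_Ω (β(v) − β(w))φ dx + E(v, φ) = ∫_Ω w^{q/m}φ dx. Then 0 ≤ v ≤ w a.e. in Ω, and v is itself a weak supersolution: E(v, φ) ≥ ∫_Ω v^{q/m}φ dx for every nonnegative φ ∈ W^{s,p}_0(Ω). -/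

import Mathlib

/-!
Test the equation for `v` with `(v - w)⁺` and subtract the supersolution inequality for `w`
tested with the same function: monotonicity of `t ↦ ⟦t⟧^{p-1}` makes the difference of the two
nonlocal terms nonnegative, leaving `∫_Ω (β(v) - β(w)) (v - w)⁺ ≤ 0`, and strict monotonicity of
`β` forces `v ≤ w`. Testing with `v⁻ = (0 - v)⁺` gives `v ≥ 0` the same way, since `w ≥ 0` and
the source is nonnegative. For bounded nonnegative `φ` the time term then has a sign, so
`E(v, φ) ≥ ∫ w^{q/m} φ ≥ ∫ v^{q/m} φ`; truncating a general `φ` at height `k` and passing to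
the limit by dominated convergence removes the boundedness.
-/

open MeasureTheory ENNReal

/-- Signed power: `spow r x = |x|^(r-1) * x`. -/
noncomputable def spow (r x : ℝ) : ℝ := |x| ^ (r - 1) * x

/-- Fractional p-Laplacian pairing
`E(u,φ) = ∫∫ ⟦u(x)−u(y)⟧^{p−1}(φ(x)−φ(y)) |x−y|^{−(d+sp)} dx dy`. -/
noncomputable def fracPairing (d : ℕ) (s p : ℝ)
    (u φ : EuclideanSpace ℝ (Fin d) → ℝ) : ℝ :=
  ∫ z : EuclideanSpace ℝ (Fin d) × EuclideanSpace ℝ (Fin d),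
    spow (p - 1) (u z.1 - u z.2) * (φ z.1 - φ z.2) / ‖z.1 - z.2‖ ^ ((d : ℝ) + s * p)

/-- Gagliardo seminorm to the `p`-th power, as an extended nonnegative real. -/
noncomputable def gagliardo (d : ℕ) (s p : ℝ)
    (u : EuclideanSpace ℝ (Fin d) → ℝ) : ℝ≥0∞ :=
  ∫⁻ z : EuclideanSpace ℝ (Fin d) × EuclideanSpace ℝ (Fin d),
    ENNReal.ofReal (|u z.1 - u z.2| ^ p / ‖z.1 - z.2‖ ^ ((d : ℝ) + s * p))

/-- Membership in `W^{s,p}_0(Ω)`. -/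
def memW0 (d : ℕ) (s p : ℝ) (Ω : Set (EuclideanSpace ℝ (Fin d)))
    (u : EuclideanSpace ℝ (Fin d) → ℝ) : Prop :=
  Measurable u ∧ MemLp u (ENNReal.ofReal p) volume ∧
    gagliardo d s p u < ⊤ ∧ ∀ᵐ x, x ∉ Ω → u x = 0

open Filter Topology

section Elementary

lemma spow_zero (r : ℝ) : spow r 0 = 0 := by simp [spow]

lemma spow_of_nonneg {r x : ℝ} (hr : 0 < r) (hx : 0 ≤ x) : spow r x = x ^ r := by
  rcases hx.eq_or_lt with rfl | hx
  · simp [spow, Real.zero_rpow hr.ne']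
  · rw [spow, abs_of_pos hx, ← Real.rpow_add_one hx.ne', sub_add_cancel]

lemma spow_neg (r x : ℝ) : spow r (-x) = -spow r x := by
  simp [spow]

lemma abs_spow {r : ℝ} (hr : 0 < r) (x : ℝ) : |spow r x| = |x| ^ r := by
  rw [← spow_of_nonneg hr (abs_nonneg x), spow, spow, abs_mul, abs_abs,
    abs_of_nonneg (Real.rpow_nonneg (abs_nonneg x) _)]

lemma spow_strictMono {r : ℝ} (hr : 0 < r) : StrictMono (spow r) := by
  have hpos : StrictMonoOn (spow r) (Set.Ici 0) := fun x hx y hy hxy => by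
    rw [spow_of_nonneg hr hx, spow_of_nonneg hr hy]
    exact Real.rpow_lt_rpow hx hxy hr
  refine StrictMonoOn.Iic_union_Ici (fun x hx y hy hxy => ?_) hpos
  have := hpos (Set.mem_Ici.2 (neg_nonneg.2 hy)) (Set.mem_Ici.2 (neg_nonneg.2 hx)) (neg_lt_neg hxy)
  rwa [spow_neg, spow_neg, neg_lt_neg_iff] at this

@[fun_prop]
lemma measurable_spow (r : ℝ) : Measurable (spow r) := by
  unfold spow
  fun_prop

lemma Monotone.sub_mul_max_sub_max_nonneg {f : ℝ → ℝ} (hf : Monotone f) {A B a b : ℝ}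
    (h : A - B = a - b) : 0 ≤ (f A - f B) * (max a 0 - max b 0) := by
  rcases le_total a b with hab | hab
  · exact mul_nonneg_of_nonpos_of_nonpos (sub_nonpos.2 (hf (by linarith)))
      (sub_nonpos.2 (max_le_max hab le_rfl))
  · exact mul_nonneg (sub_nonneg.2 (hf (by linarith))) (sub_nonneg.2 (max_le_max hab le_rfl))

lemma rpow_max_le_rpow_add_rpow {a b p : ℝ} (ha : 0 ≤ a) (hb : 0 ≤ b) :
    max a b ^ p ≤ a ^ p + b ^ p := by
  rcases le_total a b with h | h
  · rw [max_eq_right h]; linarith [Real.rpow_nonneg ha p]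
  · rw [max_eq_left h]; linarith [Real.rpow_nonneg hb p]

lemma rpow_sub_one_mul_le_rpow_add_rpow {a b p : ℝ} (ha : 0 ≤ a) (hb : 0 ≤ b) (hp : 1 ≤ p) :
    a ^ (p - 1) * b ≤ a ^ p + b ^ p :=
  calc a ^ (p - 1) * b ≤ max a b ^ (p - 1) * max a b :=
        mul_le_mul (Real.rpow_le_rpow ha (le_max_left a b) (by linarith)) (le_max_right a b) hb
          (Real.rpow_nonneg (ha.trans (le_max_left a b)) _)
    _ = max a b ^ p := by
        rw [← Real.rpow_add_one' (ha.trans (le_max_left a b)) (by linarith), sub_add_cancel]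
    _ ≤ a ^ p + b ^ p := rpow_max_le_rpow_add_rpow ha hb

lemma abs_sub_rpow_le {a b p : ℝ} (hp : 0 ≤ p) : |a - b| ^ p ≤ 2 ^ p * (|a| ^ p + |b| ^ p) :=
  calc |a - b| ^ p ≤ (2 * max |a| |b|) ^ p := by
        refine Real.rpow_le_rpow (abs_nonneg _) ((abs_sub a b).trans ?_) hp
        linarith [le_max_left |a| |b|, le_max_right |a| |b|]
    _ = 2 ^ p * max |a| |b| ^ p := Real.mul_rpow zero_le_two (le_max_of_le_left (abs_nonneg a))
    _ ≤ 2 ^ p * (|a| ^ p + |b| ^ p) := by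
        gcongr
        exact rpow_max_le_rpow_add_rpow (abs_nonneg a) (abs_nonneg b)

lemma abs_min_le_abs {a c : ℝ} (hc : 0 ≤ c) : |min a c| ≤ |a| := by
  rcases le_total a c with h | h
  · rw [min_eq_left h]
  · rw [min_eq_right h, abs_of_nonneg hc]; exact h.trans (le_abs_self a)

lemma LipschitzWith.abs_sub_le {f : ℝ → ℝ} (hf : LipschitzWith 1 f) (a b : ℝ) :
    |f a - f b| ≤ |a - b| := by
  simpa [Real.dist_eq] using hf.dist_le_mul a b

lemma tendsto_min_natCast_atTop (a : ℝ) :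
    Tendsto (fun k : ℕ => min a k) atTop (𝓝 a) :=
  tendsto_const_nhds.congr' <| (tendsto_natCast_atTop_atTop.eventually_ge_atTop a).mono
    fun _ hk => (min_eq_left hk).symm

end Elementary

section FractionalSobolev

variable {d : ℕ} {s p : ℝ} {Ω : Set (EuclideanSpace ℝ (Fin d))}

-- `fracPairing` and `gagliardo` unfold to the integrals of these integrands.
noncomputable def fracKernel (d : ℕ) (s p : ℝ)
    (z : EuclideanSpace ℝ (Fin d) × EuclideanSpace ℝ (Fin d)) : ℝ :=
  ‖z.1 - z.2‖ ^ ((d : ℝ) + s * p)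

noncomputable def gagliardoIntegrand (d : ℕ) (s p : ℝ) (u : EuclideanSpace ℝ (Fin d) → ℝ)
    (z : EuclideanSpace ℝ (Fin d) × EuclideanSpace ℝ (Fin d)) : ℝ :=
  |u z.1 - u z.2| ^ p / fracKernel d s p z

noncomputable def pairingIntegrand (d : ℕ) (s p : ℝ) (u φ : EuclideanSpace ℝ (Fin d) → ℝ)
    (z : EuclideanSpace ℝ (Fin d) × EuclideanSpace ℝ (Fin d)) : ℝ :=
  spow (p - 1) (u z.1 - u z.2) * (φ z.1 - φ z.2) / fracKernel d s p z

lemma fracKernel_nonneg (z : EuclideanSpace ℝ (Fin d) × EuclideanSpace ℝ (Fin d)) :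
    0 ≤ fracKernel d s p z :=
  Real.rpow_nonneg (norm_nonneg _) _

lemma gagliardoIntegrand_nonneg (u : EuclideanSpace ℝ (Fin d) → ℝ)
    (z : EuclideanSpace ℝ (Fin d) × EuclideanSpace ℝ (Fin d)) :
    0 ≤ gagliardoIntegrand d s p u z :=
  div_nonneg (Real.rpow_nonneg (abs_nonneg _) _) (fracKernel_nonneg z)

lemma measurable_gagliardoIntegrand {u : EuclideanSpace ℝ (Fin d) → ℝ} (hu : Measurable u) :
    Measurable (gagliardoIntegrand d s p u) := by
  unfold gagliardoIntegrand fracKernel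
  fun_prop

lemma measurable_pairingIntegrand {u φ : EuclideanSpace ℝ (Fin d) → ℝ} (hu : Measurable u)
    (hφ : Measurable φ) : Measurable (pairingIntegrand d s p u φ) := by
  unfold pairingIntegrand fracKernel
  fun_prop

lemma gagliardo_lt_top_iff {u : EuclideanSpace ℝ (Fin d) → ℝ} (hu : Measurable u) :
    gagliardo d s p u < ⊤ ↔ Integrable (gagliardoIntegrand d s p u) := by
  rw [Integrable, hasFiniteIntegral_iff_ofReal (ae_of_all _ (gagliardoIntegrand_nonneg u))]
  exact ⟨fun h => ⟨(measurable_gagliardoIntegrand hu).aestronglyMeasurable, h⟩, And.right⟩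

lemma gagliardo_comp_le (hp : 0 ≤ p) {f : ℝ → ℝ} (hf : LipschitzWith 1 f)
    (u : EuclideanSpace ℝ (Fin d) → ℝ) :
    gagliardo d s p (fun x => f (u x)) ≤ gagliardo d s p u :=
  lintegral_mono fun z => ENNReal.ofReal_le_ofReal <| div_le_div_of_nonneg_right
    (Real.rpow_le_rpow (abs_nonneg _) (hf.abs_sub_le _ _) hp) (fracKernel_nonneg z)

lemma gagliardo_sub_lt_top (hp : 0 ≤ p) {u w : EuclideanSpace ℝ (Fin d) → ℝ}
    (hu : Measurable u) (hw : Measurable w) (hu' : gagliardo d s p u < ⊤)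
    (hw' : gagliardo d s p w < ⊤) :
    gagliardo d s p (fun x => u x - w x) < ⊤ := by
  rw [gagliardo_lt_top_iff hu] at hu'
  rw [gagliardo_lt_top_iff hw] at hw'
  have huw : Measurable fun x => u x - w x := hu.sub hw
  rw [gagliardo_lt_top_iff huw]
  refine ((hu'.add hw').const_mul (2 ^ p)).mono'
    (measurable_gagliardoIntegrand huw).aestronglyMeasurable (ae_of_all _ fun z => ?_)
  rw [Real.norm_of_nonneg (gagliardoIntegrand_nonneg _ z)]
  simp only [gagliardoIntegrand, Pi.add_apply, ← add_div, ← mul_div_assoc]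
  refine div_le_div_of_nonneg_right ?_ (fracKernel_nonneg z)
  rw [show u z.1 - w z.1 - (u z.2 - w z.2) = (u z.1 - u z.2) - (w z.1 - w z.2) by ring]
  exact abs_sub_rpow_le hp

lemma memW0.measurable {u : EuclideanSpace ℝ (Fin d) → ℝ} (hu : memW0 d s p Ω u) :
    Measurable u :=
  hu.1

lemma memW0.memLp {u : EuclideanSpace ℝ (Fin d) → ℝ} (hu : memW0 d s p Ω u) :
    MemLp u (ENNReal.ofReal p) volume :=
  hu.2.1

lemma memW0.gagliardo_lt_top {u : EuclideanSpace ℝ (Fin d) → ℝ} (hu : memW0 d s p Ω u) :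
    gagliardo d s p u < ⊤ :=
  hu.2.2.1

lemma memW0.comp (hp : 0 ≤ p) {f : ℝ → ℝ} (hf : LipschitzWith 1 f) (hf0 : f 0 = 0)
    {u : EuclideanSpace ℝ (Fin d) → ℝ} (hu : memW0 d s p Ω u) :
    memW0 d s p Ω (fun x => f (u x)) := by
  obtain ⟨hum, huLp, hug, hu0⟩ := hu
  refine ⟨hf.continuous.measurable.comp hum, hf.comp_memLp hf0 huLp,
    (gagliardo_comp_le hp hf u).trans_lt hug, ?_⟩
  filter_upwards [hu0] with x hx hxΩ
  rw [hx hxΩ, hf0]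

lemma memW0.sub (hp : 0 ≤ p) {u w : EuclideanSpace ℝ (Fin d) → ℝ} (hu : memW0 d s p Ω u)
    (hw : memW0 d s p Ω w) : memW0 d s p Ω (fun x => u x - w x) := by
  obtain ⟨hum, huLp, hug, hu0⟩ := hu
  obtain ⟨hwm, hwLp, hwg, hw0⟩ := hw
  refine ⟨hum.sub hwm, huLp.sub hwLp, gagliardo_sub_lt_top hp hum hwm hug hwg, ?_⟩
  filter_upwards [hu0, hw0] with x hux hwx hxΩ
  rw [hux hxΩ, hwx hxΩ, sub_zero]

lemma abs_pairingIntegrand (hp : 1 < p) (u φ : EuclideanSpace ℝ (Fin d) → ℝ)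
    (z : EuclideanSpace ℝ (Fin d) × EuclideanSpace ℝ (Fin d)) :
    |pairingIntegrand d s p u φ z| =
      |u z.1 - u z.2| ^ (p - 1) * |φ z.1 - φ z.2| / fracKernel d s p z := by
  rw [pairingIntegrand, abs_div, abs_mul, abs_spow (by linarith),
    abs_of_nonneg (fracKernel_nonneg z)]

lemma integrable_pairingBound (hp : 1 ≤ p) {u φ : EuclideanSpace ℝ (Fin d) → ℝ}
    (hu : Measurable u) (hφ : Measurable φ) (hu' : gagliardo d s p u < ⊤)
    (hφ' : gagliardo d s p φ < ⊤) :
    Integrable fun z => |u z.1 - u z.2| ^ (p - 1) * |φ z.1 - φ z.2| / fracKernel d s p z := by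
  rw [gagliardo_lt_top_iff hu] at hu'
  rw [gagliardo_lt_top_iff hφ] at hφ'
  refine (hu'.add hφ').mono' (Measurable.aestronglyMeasurable (by unfold fracKernel; fun_prop))
    (ae_of_all _ fun z => ?_)
  rw [Real.norm_of_nonneg (div_nonneg (by positivity) (fracKernel_nonneg z)), Pi.add_apply,
    gagliardoIntegrand, gagliardoIntegrand, ← add_div]
  exact div_le_div_of_nonneg_right
    (rpow_sub_one_mul_le_rpow_add_rpow (abs_nonneg _) (abs_nonneg _) hp) (fracKernel_nonneg z)

lemma integrable_pairingIntegrand (hp : 1 < p) {u φ : EuclideanSpace ℝ (Fin d) → ℝ}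
    (hu : Measurable u) (hφ : Measurable φ) (hu' : gagliardo d s p u < ⊤)
    (hφ' : gagliardo d s p φ < ⊤) :
    Integrable (pairingIntegrand d s p u φ) :=
  (integrable_pairingBound hp.le hu hφ hu' hφ').mono'
    (measurable_pairingIntegrand hu hφ).aestronglyMeasurable
    (ae_of_all _ fun z => (abs_pairingIntegrand hp u φ z).le)

end FractionalSobolev

section FracPairing

variable {d : ℕ} {s p : ℝ}

lemma fracPairing_zero_left (φ : EuclideanSpace ℝ (Fin d) → ℝ) :
    fracPairing d s p (fun _ => 0) φ = 0 := by
  simp [fracPairing, spow_zero]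

lemma fracPairing_le_fracPairing_posPart_sub (hp : 1 < p) {u₁ u₂ : EuclideanSpace ℝ (Fin d) → ℝ}
    (hu₁ : Measurable u₁) (hu₂ : Measurable u₂) (hu₁' : gagliardo d s p u₁ < ⊤)
    (hu₂' : gagliardo d s p u₂ < ⊤) :
    fracPairing d s p u₂ (fun x => max (u₁ x - u₂ x) 0) ≤
      fracPairing d s p u₁ (fun x => max (u₁ x - u₂ x) 0) := by
  have hφ : Measurable fun x => max (u₁ x - u₂ x) 0 := (hu₁.sub hu₂).max measurable_const
  have hφ' : gagliardo d s p (fun x => max (u₁ x - u₂ x) 0) < ⊤ :=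
    (gagliardo_comp_le (by linarith) (LipschitzWith.id.max_const 0) _).trans_lt
      (gagliardo_sub_lt_top (by linarith) hu₁ hu₂ hu₁' hu₂')
  refine integral_mono (integrable_pairingIntegrand hp hu₂ hφ hu₂' hφ')
    (integrable_pairingIntegrand hp hu₁ hφ hu₁' hφ') fun z => ?_
  rw [← sub_nonneg]
  simp only [← sub_div, ← sub_mul]
  exact div_nonneg ((spow_strictMono (by linarith)).monotone.sub_mul_max_sub_max_nonneg
    (by ring)) (fracKernel_nonneg z)

lemma fracPairing_negPart_nonpos (hp : 1 < p) {u : EuclideanSpace ℝ (Fin d) → ℝ}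
    (hu : Measurable u) (hu' : gagliardo d s p u < ⊤) :
    fracPairing d s p u (fun x => max (-u x) 0) ≤ 0 := by
  have h := fracPairing_le_fracPairing_posPart_sub hp (u₁ := fun _ => 0) measurable_const hu
    (by simp [gagliardo, Real.zero_rpow (by linarith : p ≠ 0)]) hu'
  simpa only [zero_sub, fracPairing_zero_left] using h

lemma tendsto_fracPairing_min_natCast (hp : 1 < p) {u φ : EuclideanSpace ℝ (Fin d) → ℝ}
    (hu : Measurable u) (hφ : Measurable φ) (hu' : gagliardo d s p u < ⊤)
    (hφ' : gagliardo d s p φ < ⊤) :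
    Tendsto (fun k : ℕ => fracPairing d s p u fun x => min (φ x) k) atTop
      (𝓝 (fracPairing d s p u φ)) := by
  refine tendsto_integral_of_dominated_convergence (F := fun (k : ℕ) =>
      pairingIntegrand d s p u fun x => min (φ x) k) _
    (fun k => (measurable_pairingIntegrand hu (hφ.min measurable_const)).aestronglyMeasurable)
    (integrable_pairingBound hp.le hu hφ hu' hφ') (fun k => ae_of_all _ fun z => ?_)
    (ae_of_all _ fun z => ?_)
  · rw [Real.norm_eq_abs, abs_pairingIntegrand hp]
    exact div_le_div_of_nonneg_right (mul_le_mul_of_nonneg_left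
      ((LipschitzWith.id.min_const (k : ℝ)).abs_sub_le _ _) (Real.rpow_nonneg (abs_nonneg _) _))
      (fracKernel_nonneg z)
  · exact (((tendsto_min_natCast_atTop _).sub (tendsto_min_natCast_atTop _)).const_mul _).div_const
      _

end FracPairing

lemma tendsto_integral_mul_min_natCast {α : Type*} [MeasurableSpace α] {μ : Measure α}
    {g φ : α → ℝ} (hg : MemLp g ⊤ μ) (hφ : Integrable φ μ) (hφm : Measurable φ) :
    Tendsto (fun k : ℕ => ∫ x, g x * min (φ x) k ∂μ) atTop (𝓝 (∫ x, g x * φ x ∂μ)) := by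
  refine tendsto_integral_of_dominated_convergence (fun x => ‖g x * φ x‖)
    (fun k => hg.1.mul (hφm.min measurable_const).aestronglyMeasurable)
    (hg.integrable_mul (memLp_one_iff_integrable.2 hφ)).norm (fun k => ae_of_all _ fun x => ?_)
    (ae_of_all _ fun x => (tendsto_min_natCast_atTop _).const_mul _)
  rw [norm_mul, norm_mul]
  exact mul_le_mul_of_nonneg_left (abs_min_le_abs k.cast_nonneg) (norm_nonneg _)

section Comparison

variable {α : Type*} [MeasurableSpace α] {μ : Measure α}

lemma ae_eq_zero_of_integral_nonpos {g : α → ℝ} (hg0 : 0 ≤ᵐ[μ] g) (hg : Integrable g μ)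
    (h : ∫ x, g x ∂μ ≤ 0) : g =ᵐ[μ] 0 :=
  (integral_eq_zero_iff_of_nonneg_ae hg0 hg).1 (le_antisymm h (integral_nonneg_of_ae hg0))

lemma ae_le_of_integral_sub_mul_posPart_nonpos {β : ℝ → ℝ} (hβ : StrictMono β) {u w : α → ℝ}
    (hint : Integrable (fun x => (β (u x) - β (w x)) * max (u x - w x) 0) μ)
    (h : ∫ x, (β (u x) - β (w x)) * max (u x - w x) 0 ∂μ ≤ 0) : ∀ᵐ x ∂μ, u x ≤ w x := by
  have hnn : ∀ x, 0 ≤ (β (u x) - β (w x)) * max (u x - w x) 0 := fun x => by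
    simpa using hβ.monotone.sub_mul_max_sub_max_nonneg (A := u x) (B := w x) (b := 0) (by ring)
  filter_upwards [ae_eq_zero_of_integral_nonpos (ae_of_all _ hnn) hint h] with x hx
  by_contra! hlt
  exact (mul_pos (sub_pos.2 (hβ hlt)) (lt_max_of_lt_left (sub_pos.2 hlt))).ne' hx

lemma ae_nonneg_of_integral_sub_mul_negPart_nonneg {β : ℝ → ℝ} (hβ : StrictMono β)
    {u w : α → ℝ} (hw : 0 ≤ᵐ[μ] w)
    (hint : Integrable (fun x => (β (u x) - β (w x)) * max (-u x) 0) μ)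
    (h : 0 ≤ ∫ x, (β (u x) - β (w x)) * max (-u x) 0 ∂μ) : 0 ≤ᵐ[μ] u := by
  have hnn : 0 ≤ᵐ[μ] fun x => -((β (u x) - β (w x)) * max (-u x) 0) := by
    filter_upwards [hw] with x hwx
    rcases le_or_gt 0 (u x) with hux | hux
    · simp [hux]
    · exact neg_nonneg.2 (mul_nonpos_of_nonpos_of_nonneg
        (sub_nonpos.2 ((hβ hux).le.trans (hβ.monotone hwx))) (le_max_right _ _))
  filter_upwards [ae_eq_zero_of_integral_nonpos hnn hint.neg (by rw [integral_neg]; linarith), hw]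
    with x hx hwx
  by_contra! hlt
  have hneg : (β (u x) - β (w x)) * max (-u x) 0 < 0 :=
    mul_neg_of_neg_of_pos (sub_neg.2 ((hβ hlt).trans_le (hβ.monotone hwx)))
      (lt_max_of_lt_left (neg_pos.2 hlt))
  exact hneg.ne (neg_eq_zero.1 hx)

lemma MeasureTheory.MemLp.comp_of_abs_le_rpow {f : α → ℝ} {g : ℝ → ℝ} {a : ℝ} (hf : MemLp f ⊤ μ)
    (hg : Measurable g) (ha : 0 ≤ a) (hga : ∀ t, |g t| ≤ |t| ^ a) :
    MemLp (fun x => g (f x)) ⊤ μ := by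
  refine memLp_top_of_bound (hg.comp_aemeasurable hf.1.aemeasurable).aestronglyMeasurable
    (lpNorm f ⊤ μ ^ a) ?_
  filter_upwards [ae_le_lpNorm_exponent_top hf] with x hx
  exact (hga _).trans (Real.rpow_le_rpow (abs_nonneg _) hx ha)

lemma integrable_spow_sub_spow_mul [IsFiniteMeasure μ] {r : ℝ} (hr : 0 < r) {u w φ : α → ℝ}
    (hu : MemLp u ⊤ μ) (hw : MemLp w ⊤ μ) (hφ : MemLp φ ⊤ μ) :
    Integrable (fun x => (spow r (u x) - spow r (w x)) * φ x) μ :=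
  (hφ.mul ((hu.comp_of_abs_le_rpow (measurable_spow r) hr.le fun t => (abs_spow hr t).le).sub
    (hw.comp_of_abs_le_rpow (measurable_spow r) hr.le fun t => (abs_spow hr t).le))).integrable
    le_top

end Comparison

section ImplicitEuler

variable {d : ℕ} {s p : ℝ} {Ω : Set (EuclideanSpace ℝ (Fin d))}

def IsWeakSupersolution (d : ℕ) (s p : ℝ) (Ω : Set (EuclideanSpace ℝ (Fin d)))
    (f u : EuclideanSpace ℝ (Fin d) → ℝ) : Prop :=
  ∀ φ, memW0 d s p Ω φ → (∀ x, 0 ≤ φ x) → ∫ x in Ω, f x * φ x ≤ fracPairing d s p u φ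

def IsImplicitEulerStep (d : ℕ) (s p : ℝ) (Ω : Set (EuclideanSpace ℝ (Fin d))) (β : ℝ → ℝ)
    (Δt : ℝ) (f w v : EuclideanSpace ℝ (Fin d) → ℝ) : Prop :=
  ∀ φ, memW0 d s p Ω φ → MemLp φ ⊤ (volume.restrict Ω) →
    (1 / Δt) * (∫ x in Ω, (β (v x) - β (w x)) * φ x) + fracPairing d s p v φ =
      ∫ x in Ω, f x * φ x

lemma IsImplicitEulerStep.ae_le (hp : 1 < p) {r Δt : ℝ} (hr : 0 < r) (hΔt : 0 < Δt)
    [IsFiniteMeasure (volume.restrict Ω)] {f w v : EuclideanSpace ℝ (Fin d) → ℝ}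
    (hw : memW0 d s p Ω w) (hwB : MemLp w ⊤ (volume.restrict Ω))
    (hv : memW0 d s p Ω v) (hvB : MemLp v ⊤ (volume.restrict Ω))
    (hsuper : IsWeakSupersolution d s p Ω f w)
    (hstep : IsImplicitEulerStep d s p Ω (spow r) Δt f w v) :
    ∀ᵐ x ∂(volume.restrict Ω), v x ≤ w x := by
  have hφ : memW0 d s p Ω fun x => max (v x - w x) 0 :=
    (hv.sub (by linarith) hw).comp (by linarith) (LipschitzWith.id.max_const 0) (max_self 0)
  have hφB : MemLp (fun x => max (v x - w x) 0) ⊤ (volume.restrict Ω) :=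
    (LipschitzWith.id.max_const 0).comp_memLp (max_self 0) (hvB.sub hwB)
  refine ae_le_of_integral_sub_mul_posPart_nonpos (spow_strictMono hr)
    (integrable_spow_sub_spow_mul hr hvB hwB hφB)
    (nonpos_of_mul_nonpos_right ?_ (one_div_pos.2 hΔt))
  linarith [hstep _ hφ hφB, hsuper _ hφ fun x => le_max_right _ _,
    fracPairing_le_fracPairing_posPart_sub hp hv.measurable hw.measurable hv.gagliardo_lt_top
      hw.gagliardo_lt_top]

lemma IsImplicitEulerStep.ae_nonneg (hp : 1 < p) {r Δt : ℝ} (hr : 0 < r) (hΔt : 0 < Δt)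
    [IsFiniteMeasure (volume.restrict Ω)] {f w v : EuclideanSpace ℝ (Fin d) → ℝ}
    (hwB : MemLp w ⊤ (volume.restrict Ω)) (hw0 : 0 ≤ᵐ[volume.restrict Ω] w)
    (hv : memW0 d s p Ω v) (hvB : MemLp v ⊤ (volume.restrict Ω))
    (hf0 : 0 ≤ᵐ[volume.restrict Ω] f) (hstep : IsImplicitEulerStep d s p Ω (spow r) Δt f w v) :
    0 ≤ᵐ[volume.restrict Ω] v := by
  have hφ : memW0 d s p Ω fun x => max (-v x) 0 :=
    hv.comp (by linarith) (LipschitzWith.id.neg.max_const 0) (by simp)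
  have hφB : MemLp (fun x => max (-v x) 0) ⊤ (volume.restrict Ω) :=
    (LipschitzWith.id.neg.max_const 0).comp_memLp (by simp) hvB
  refine ae_nonneg_of_integral_sub_mul_negPart_nonneg (spow_strictMono hr) hw0
    (integrable_spow_sub_spow_mul hr hvB hwB hφB)
    (nonneg_of_mul_nonneg_right ?_ (one_div_pos.2 hΔt))
  have hf : 0 ≤ ∫ x in Ω, f x * max (-v x) 0 := integral_nonneg_of_ae <| by
    filter_upwards [hf0] with x hx using mul_nonneg hx (le_max_right _ _)
  linarith [hstep _ hφ hφB, fracPairing_negPart_nonpos hp hv.measurable hv.gagliardo_lt_top]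

lemma IsImplicitEulerStep.le_fracPairing {β : ℝ → ℝ} (hβ : Monotone β) {Δt : ℝ} (hΔt : 0 < Δt)
    [IsFiniteMeasure (volume.restrict Ω)] {f g w v : EuclideanSpace ℝ (Fin d) → ℝ}
    (hstep : IsImplicitEulerStep d s p Ω β Δt f w v) (hvw : ∀ᵐ x ∂(volume.restrict Ω), v x ≤ w x)
    (hgf : ∀ᵐ x ∂(volume.restrict Ω), g x ≤ f x) (hf : MemLp f ⊤ (volume.restrict Ω))
    (hg : MemLp g ⊤ (volume.restrict Ω)) {φ : EuclideanSpace ℝ (Fin d) → ℝ}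
    (hφ : memW0 d s p Ω φ) (hφB : MemLp φ ⊤ (volume.restrict Ω)) (hφ0 : ∀ x, 0 ≤ φ x) :
    ∫ x in Ω, g x * φ x ≤ fracPairing d s p v φ := by
  have htime : ∫ x in Ω, (β (v x) - β (w x)) * φ x ≤ 0 := integral_nonpos_of_ae <| by
    filter_upwards [hvw] with x hx
      using mul_nonpos_of_nonpos_of_nonneg (sub_nonpos.2 (hβ hx)) (hφ0 x)
  have hsource : ∫ x in Ω, g x * φ x ≤ ∫ x in Ω, f x * φ x :=
    integral_mono_ae ((hφB.mul hg).integrable le_top) ((hφB.mul hf).integrable le_top) <| by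
      filter_upwards [hgf] with x hx using mul_le_mul_of_nonneg_right hx (hφ0 x)
  nlinarith [hstep φ hφ hφB, one_div_pos.2 hΔt]

lemma isWeakSupersolution_of_bounded (hp : 1 < p) [IsFiniteMeasure (volume.restrict Ω)]
    {f u : EuclideanSpace ℝ (Fin d) → ℝ} (hu : memW0 d s p Ω u) (hf : MemLp f ⊤ (volume.restrict Ω))
    (h : ∀ φ, memW0 d s p Ω φ → MemLp φ ⊤ (volume.restrict Ω) → (∀ x, 0 ≤ φ x) →
      ∫ x in Ω, f x * φ x ≤ fracPairing d s p u φ) :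
    IsWeakSupersolution d s p Ω f u := by
  intro φ hφ hφ0
  have hφk : ∀ k : ℕ, memW0 d s p Ω fun x => min (φ x) k := fun k =>
    hφ.comp (by linarith) (LipschitzWith.id.min_const k) (min_eq_left k.cast_nonneg)
  have hφkB : ∀ k : ℕ, MemLp (fun x => min (φ x) k) ⊤ (volume.restrict Ω) := fun k =>
    memLp_top_of_bound (hφk k).measurable.aestronglyMeasurable k <| ae_of_all _ fun x => by
      rw [Real.norm_of_nonneg (le_min (hφ0 x) k.cast_nonneg)]
      exact min_le_right _ _
  have hφint : Integrable φ (volume.restrict Ω) :=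
    ((hφ.memLp.restrict Ω).mono_exponent (ENNReal.one_le_ofReal.2 hp.le)).integrable le_rfl
  exact le_of_tendsto_of_tendsto' (tendsto_integral_mul_min_natCast hf hφint hφ.measurable)
    (tendsto_fracPairing_min_natCast hp hu.measurable hφ.measurable hu.gagliardo_lt_top
      hφ.gagliardo_lt_top)
    fun k => h _ (hφk k) (hφkB k) fun x => le_min (hφ0 x) k.cast_nonneg

end ImplicitEuler

theorem stmt16_general (d : ℕ) (p s m q : ℝ) (hp : 1 < p)
    (hm : 1 < m) (hq : 0 < q)
    (Δt : ℝ) (hΔt : 0 < Δt)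
    (Ω : Set (EuclideanSpace ℝ (Fin d))) (hΩb : Bornology.IsBounded Ω)
    (w v : EuclideanSpace ℝ (Fin d) → ℝ)
    (hw : memW0 d s p Ω w) (hwB : MemLp w ⊤ (volume.restrict Ω))
    (hwnn : ∀ᵐ x, 0 ≤ w x)
    (hwsuper : ∀ φ : EuclideanSpace ℝ (Fin d) → ℝ,
      memW0 d s p Ω φ → (∀ x, 0 ≤ φ x) →
      fracPairing d s p w φ ≥ ∫ x in Ω, w x ^ (q / m) * φ x)
    (hv : memW0 d s p Ω v) (hvB : MemLp v ⊤ (volume.restrict Ω))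
    (heq : ∀ φ : EuclideanSpace ℝ (Fin d) → ℝ,
      memW0 d s p Ω φ → MemLp φ ⊤ (volume.restrict Ω) →
      (1 / Δt) * (∫ x in Ω, (spow m⁻¹ (v x) - spow m⁻¹ (w x)) * φ x) +
        fracPairing d s p v φ = ∫ x in Ω, w x ^ (q / m) * φ x) :
    (∀ᵐ x ∂(volume.restrict Ω), 0 ≤ v x ∧ v x ≤ w x) ∧
      ∀ φ : EuclideanSpace ℝ (Fin d) → ℝ,
        memW0 d s p Ω φ → (∀ x, 0 ≤ φ x) →
        fracPairing d s p v φ ≥ ∫ x in Ω, v x ^ (q / m) * φ x := by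
  have : IsFiniteMeasure (volume.restrict Ω) := isFiniteMeasure_restrict.2 hΩb.measure_lt_top.ne
  have hr : 0 < m⁻¹ := inv_pos.2 (by linarith)
  have hqm : 0 ≤ q / m := div_nonneg hq.le (by linarith)
  have hrpow {u : EuclideanSpace ℝ (Fin d) → ℝ} (hu : MemLp u ⊤ (volume.restrict Ω)) :
      MemLp (fun x => u x ^ (q / m)) ⊤ (volume.restrict Ω) :=
    hu.comp_of_abs_le_rpow (by fun_prop) hqm fun t => Real.abs_rpow_le_abs_rpow t _
  have hle := IsImplicitEulerStep.ae_le hp hr hΔt hw hwB hv hvB hwsuper heq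
  have hnn := IsImplicitEulerStep.ae_nonneg hp hr hΔt hwB (ae_restrict_of_ae hwnn) hv hvB
    (ae_restrict_of_ae (hwnn.mono fun x hx => Real.rpow_nonneg hx _)) heq
  refine ⟨hnn.and hle, isWeakSupersolution_of_bounded hp hv (hrpow hvB) fun φ hφ hφB hφ0 =>
    IsImplicitEulerStep.le_fracPairing (spow_strictMono hr).monotone hΔt heq hle ?_ (hrpow hwB)
      (hrpow hvB) hφ hφB hφ0⟩
  filter_upwards [hnn, hle] with x h0 h1 using Real.rpow_le_rpow h0 h1 hqm

/-- one implicit Euler step preserves stationary supersolutions.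
If `w ≥ 0` is a weak supersolution of `(−Δ)^s_p w = w^{q/m}` and `v` solves
`(1/Δt)β(v) + (−Δ)^s_p v = w^{q/m} + (1/Δt)β(w)` weakly, then `0 ≤ v ≤ w` a.e. in `Ω`
and `v` is itself a weak supersolution. -/
theorem stmt16 (d : ℕ) (hd : 1 ≤ d) (p s m q : ℝ) (hp : 1 < p)
    (hs : s ∈ Set.Ioo (0 : ℝ) 1) (hm : 1 < m) (hq : 0 < q)
    (Δt : ℝ) (hΔt : 0 < Δt)
    (Ω : Set (EuclideanSpace ℝ (Fin d))) (hΩo : IsOpen Ω) (hΩb : Bornology.IsBounded Ω)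
    (w v : EuclideanSpace ℝ (Fin d) → ℝ)
    (hw : memW0 d s p Ω w) (hwB : MemLp w ⊤ (volume.restrict Ω))
    (hwnn : ∀ᵐ x, 0 ≤ w x)
    (hwsuper : ∀ φ : EuclideanSpace ℝ (Fin d) → ℝ,
      memW0 d s p Ω φ → (∀ x, 0 ≤ φ x) →
      fracPairing d s p w φ ≥ ∫ x in Ω, w x ^ (q / m) * φ x)
    (hv : memW0 d s p Ω v) (hvB : MemLp v ⊤ (volume.restrict Ω))
    (heq : ∀ φ : EuclideanSpace ℝ (Fin d) → ℝ,
      memW0 d s p Ω φ → MemLp φ ⊤ (volume.restrict Ω) →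
      (1 / Δt) * (∫ x in Ω, (spow m⁻¹ (v x) - spow m⁻¹ (w x)) * φ x) +
        fracPairing d s p v φ = ∫ x in Ω, w x ^ (q / m) * φ x) :
    (∀ᵐ x ∂(volume.restrict Ω), 0 ≤ v x ∧ v x ≤ w x) ∧
      ∀ φ : EuclideanSpace ℝ (Fin d) → ℝ,
        memW0 d s p Ω φ → (∀ x, 0 ≤ φ x) →
        fracPairing d s p v φ ≥ ∫ x in Ω, v x ^ (q / m) * φ x :=
  stmt16_general d p s m q hp hm hq Δt hΔt Ω hΩb w v hw hwB hwnn hwsuper hv hvB heq
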